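/- arXiv:1105.2803 — 3 statements merged into one kernel-verified Lean document; each statement's English description precedes it below -/
import Mathlib

section
/- Let r, s be real with 0 < s, 2s < r, and r + 5s/3 < 1, and suppose (3 − 2s)/9 ≤ r ≤ (3 + 8s)/9. Then the point p = ((3 + r − 2s)/10, (21 − 3r − 4s)/30) lies in the closed region D7 = {(x₁, x₂) : r − s ≤ x₁ ≤ r, r ≤ x₂ ≤ 1 − 4s/3, x₁ ≤ x₂} and is a fixed point of the affine map F₇, i.e. F₇(p) = p. -/
/-- The affine branch of the return-time map on region 7. -/
noncomputable def F7 (r s : ℝ) (p : ℝ × ℝ) : ℝ × ℝ :=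
  (1 - p.2 - s/3, 1 - p.2 + 4*p.1/3 - r/3)

/-- The closed region D7. -/
def D7 (r s : ℝ) : Set (ℝ × ℝ) :=
  {p | r - s ≤ p.1 ∧ p.1 ≤ r ∧ r ≤ p.2 ∧ p.2 ≤ 1 - 4*s/3 ∧ p.1 ≤ p.2}

noncomputable def fixedPoint7 (r s : ℝ) : ℝ × ℝ :=
  ((3 + r - 2*s)/10, (21 - 3*r - 4*s)/30)

theorem F7_eq_self_iff (r s : ℝ) (p : ℝ × ℝ) : F7 r s p = p ↔ p = fixedPoint7 r s := by
  obtain ⟨x₁, x₂⟩ := p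
  simp only [F7, fixedPoint7, Prod.mk.injEq]
  constructor
  · rintro ⟨h₁, h₂⟩
    constructor <;> linarith
  · rintro ⟨rfl, rfl⟩
    constructor <;> ring

theorem fixedPoint7_mem_D7 {r s : ℝ} (hrs : 2*s < r)
    (hlo : (3 - 2*s)/9 ≤ r) (hhi : r ≤ (3 + 8*s)/9) : fixedPoint7 r s ∈ D7 r s := by
  -- The window for r is nonempty only if s ≥ 0, and it meets (2s, ∞) only if s < 3/10.
  have hs_nonneg : 0 ≤ s := by linarith
  have hs_lt : s < 3/10 := by linarith
  refine ⟨?_, ?_, ?_, ?_, ?_⟩ <;> simp only [fixedPoint7] <;> linarith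

theorem fixed_point_in_region7_general (r s : ℝ) (hrs : 2*s < r)
    (hlo : (3 - 2*s)/9 ≤ r) (hhi : r ≤ (3 + 8*s)/9) :
    ((3 + r - 2*s)/10, (21 - 3*r - 4*s)/30) ∈ D7 r s ∧
    F7 r s ((3 + r - 2*s)/10, (21 - 3*r - 4*s)/30)
      = ((3 + r - 2*s)/10, (21 - 3*r - 4*s)/30) :=
  ⟨fixedPoint7_mem_D7 hrs hlo hhi, (F7_eq_self_iff r s _).2 rfl⟩

theorem fixed_point_in_region7 (r s : ℝ) (hs : 0 < s) (hrs : 2*s < r)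
    (h1 : r + 5*s/3 < 1) (hlo : (3 - 2*s)/9 ≤ r) (hhi : r ≤ (3 + 8*s)/9) :
    ((3 + r - 2*s)/10, (21 - 3*r - 4*s)/30) ∈ D7 r s ∧
    F7 r s ((3 + r - 2*s)/10, (21 - 3*r - 4*s)/30)
      = ((3 + r - 2*s)/10, (21 - 3*r - 4*s)/30) :=
  fixed_point_in_region7_general r s hrs hlo hhi
end

section
/- Let r, s be real with 0 < s, 2s < r, and r + 5s/3 < 1, and suppose r ≤ (3 − 2s)/9. Set p₁ = (r, 1 − r − s/3), p₂ = (r, 2r + s/3), p₃ = (1 − 2r − 2s/3, 1 − r − s/3). Then p₁ and p₂ lie in the closed region D7 = {(x₁, x₂) : r − s ≤ x₁ ≤ r, r ≤ x₂ ≤ 1 − 4s/3, x₁ ≤ x₂}, p₃ lies in the closed region D8 = {(x₁, x₂) : r ≤ x₁ ≤ x₂ ≤ 1 − 4s/3}, and F₇(p₁) = p₂, F₇(p₂) = p₃, F₈(p₃) = p₁; i.e. (p₁, p₂, p₃) is a period-3 orbit with symbolic code 7 → 7 → 8. -/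
/-- The affine branch of the return-time map on region 8. -/
noncomputable def F8 (s : ℝ) (p : ℝ × ℝ) : ℝ × ℝ :=
  (1 - p.2 - s/3, 1 - p.2 + p.1)

/-- The closed region D8. -/
def D8 (r s : ℝ) : Set (ℝ × ℝ) :=
  {p | r ≤ p.1 ∧ p.1 ≤ p.2 ∧ p.2 ≤ 1 - 4*s/3}

theorem F7_orbit_first (r s : ℝ) : F7 r s (r, 1 - r - s/3) = (r, 2*r + s/3) := by
  simp only [F7, Prod.mk.injEq]
  constructor <;> ring

theorem F7_orbit_second (r s : ℝ) :
    F7 r s (r, 2*r + s/3) = (1 - 2*r - 2*s/3, 1 - r - s/3) := by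
  simp only [F7, Prod.mk.injEq]
  constructor <;> ring

theorem F8_orbit_third (r s : ℝ) : F8 s (1 - 2*r - 2*s/3, 1 - r - s/3) = (r, 1 - r - s/3) := by
  simp only [F8, Prod.mk.injEq]
  constructor <;> ring

section Membership

variable {r s : ℝ}

theorem orbit_first_mem_D7 (hs : 0 ≤ s) (hsr : s ≤ r) (h : 2*r + s/3 ≤ 1) :
    (r, 1 - r - s/3) ∈ D7 r s :=
  ⟨by linarith, le_rfl, by linarith, by linarith, by linarith⟩

theorem orbit_second_mem_D7 (hs : 0 ≤ s) (hr : 0 ≤ r) (h : 2*r + 5*s/3 ≤ 1) :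
    (r, 2*r + s/3) ∈ D7 r s :=
  ⟨by linarith, le_rfl, by linarith, by linarith, by linarith⟩

theorem orbit_third_mem_D8 (hs : 0 ≤ s) (hsr : s ≤ r) (h : 3*r + 2*s/3 ≤ 1) :
    (1 - 2*r - 2*s/3, 1 - r - s/3) ∈ D8 r s :=
  ⟨by linarith, by linarith, by linarith⟩

end Membership

theorem period3_orbit_778_general (r s : ℝ) (hs : 0 < s) (hrs : 2*s < r)
    (hhi : r ≤ (3 - 2*s)/9) :
    ((r : ℝ), 1 - r - s/3) ∈ D7 r s ∧
    ((r : ℝ), 2*r + s/3) ∈ D7 r s ∧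
    (1 - 2*r - 2*s/3, 1 - r - s/3) ∈ D8 r s ∧
    F7 r s (r, 1 - r - s/3) = (r, 2*r + s/3) ∧
    F7 r s (r, 2*r + s/3) = (1 - 2*r - 2*s/3, 1 - r - s/3) ∧
    F8 s (1 - 2*r - 2*s/3, 1 - r - s/3) = (r, 1 - r - s/3) := by
  have hs' : 0 ≤ s := hs.le
  have hsr : s ≤ r := by linarith
  have hr : 0 ≤ r := by linarith
  have hp₁ : 2*r + s/3 ≤ 1 := by linarith
  have hp₂ : 2*r + 5*s/3 ≤ 1 := by linarith
  have hp₃ : 3*r + 2*s/3 ≤ 1 := by linarith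
  exact ⟨orbit_first_mem_D7 hs' hsr hp₁, orbit_second_mem_D7 hs' hr hp₂,
    orbit_third_mem_D8 hs' hsr hp₃, F7_orbit_first r s, F7_orbit_second r s,
    F8_orbit_third r s⟩

theorem period3_orbit_778 (r s : ℝ) (hs : 0 < s) (hrs : 2*s < r)
    (h1 : r + 5*s/3 < 1) (hhi : r ≤ (3 - 2*s)/9) :
    ((r : ℝ), 1 - r - s/3) ∈ D7 r s ∧
    ((r : ℝ), 2*r + s/3) ∈ D7 r s ∧
    (1 - 2*r - 2*s/3, 1 - r - s/3) ∈ D8 r s ∧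
    F7 r s (r, 1 - r - s/3) = (r, 2*r + s/3) ∧
    F7 r s (r, 2*r + s/3) = (1 - 2*r - 2*s/3, 1 - r - s/3) ∧
    F8 s (1 - 2*r - 2*s/3, 1 - r - s/3) = (r, 1 - r - s/3) :=
  period3_orbit_778_general r s hs hrs hhi
end

section
/- Let r, s be real with 0 < s, 2s < r, and r + 5s/3 < 1, and suppose 2/3 + s < r. Let x₁ ∈ (1 − r + s, 2(r − s) − 1) and x₂ ∈ (1 − r + s + x₁, r − s). Then the three points (x₁, x₂), (1 − x₂, 1 − x₂ + x₁), (x₂ − x₁, 1 − x₁) all lie in the closed region D1 = {(y₁, y₂) : 0 ≤ y₁ ≤ y₂ ≤ r − s}, and F₁ maps each of them cyclically to the next: F₁(x₁, x₂) = (1 − x₂, 1 − x₂ + x₁), F₁(1 − x₂, 1 − x₂ + x₁) = (x₂ − x₁, 1 − x₁), and F₁(x₂ − x₁, 1 − x₁) = (x₁, x₂). Thus there is a two-parameter family of period-3 orbits lying entirely in region 1. -/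
/-- The affine branch of the return-time map on region 1. -/
noncomputable def F1 (p : ℝ × ℝ) : ℝ × ℝ :=
  (1 - p.2, 1 - p.2 + p.1)

/-- The closed region D1. -/
def D1 (r s : ℝ) : Set (ℝ × ℝ) :=
  {p | 0 ≤ p.1 ∧ p.1 ≤ p.2 ∧ p.2 ≤ r - s}

/-! The affine map `F1` has order three on all of `ℝ²`, so the three points form a cycle.
For the whole orbit to lie in `D1` it suffices that the starting point lies there and that its
iterates satisfy the two bounds `1 - x₂ + x₁ ≤ r - s` and `1 - x₁ ≤ r - s`; all other bounds
follow from `r - s ≤ 1`. -/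

theorem F1_F1 (p : ℝ × ℝ) : F1 (F1 p) = (p.2 - p.1, 1 - p.1) := by
  simp only [F1, Prod.mk.injEq]
  constructor <;> ring

theorem F1_F1_F1 (p : ℝ × ℝ) : F1 (F1 (F1 p)) = p := by
  rw [F1_F1]
  simp only [F1, Prod.ext_iff]
  constructor <;> ring

theorem orbit_mem_D1 {r s : ℝ} {p : ℝ × ℝ} (hrs : r - s ≤ 1) (h₁ : 1 - r + s ≤ p.1)
    (h₂ : 1 - r + s + p.1 ≤ p.2) (h₃ : p.2 ≤ r - s) :
    p ∈ D1 r s ∧ F1 p ∈ D1 r s ∧ F1 (F1 p) ∈ D1 r s := by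
  rw [F1_F1]
  simp only [D1, F1, Set.mem_ofPred_eq]
  refine ⟨⟨?_, ?_, ?_⟩, ⟨?_, ?_, ?_⟩, ⟨?_, ?_, ?_⟩⟩ <;> linarith

theorem neutral_period3_family_in_region1_general (r s x₁ x₂ : ℝ)
    (hs : 0 < s) (h1 : r + 5*s/3 < 1)
    (hx1lo : 1 - r + s < x₁)
    (hx2lo : 1 - r + s + x₁ < x₂) (hx2hi : x₂ < r - s) :
    (x₁, x₂) ∈ D1 r s ∧
    (1 - x₂, 1 - x₂ + x₁) ∈ D1 r s ∧
    (x₂ - x₁, 1 - x₁) ∈ D1 r s ∧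
    F1 (x₁, x₂) = (1 - x₂, 1 - x₂ + x₁) ∧
    F1 (1 - x₂, 1 - x₂ + x₁) = (x₂ - x₁, 1 - x₁) ∧
    F1 (x₂ - x₁, 1 - x₁) = (x₁, x₂) := by
  have orbit := orbit_mem_D1 (p := (x₁, x₂)) (by linarith) hx1lo.le hx2lo.le hx2hi.le
  have cycle := F1_F1_F1 (x₁, x₂)
  rw [F1_F1 (x₁, x₂)] at orbit cycle
  exact ⟨orbit.1, orbit.2.1, orbit.2.2, rfl, F1_F1 (x₁, x₂), cycle⟩

theorem neutral_period3_family_in_region1 (r s x₁ x₂ : ℝ)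
    (hs : 0 < s) (hrs : 2*s < r) (h1 : r + 5*s/3 < 1) (hlo : 2/3 + s < r)
    (hx1lo : 1 - r + s < x₁) (hx1hi : x₁ < 2*(r - s) - 1)
    (hx2lo : 1 - r + s + x₁ < x₂) (hx2hi : x₂ < r - s) :
    (x₁, x₂) ∈ D1 r s ∧
    (1 - x₂, 1 - x₂ + x₁) ∈ D1 r s ∧
    (x₂ - x₁, 1 - x₁) ∈ D1 r s ∧
    F1 (x₁, x₂) = (1 - x₂, 1 - x₂ + x₁) ∧
    F1 (1 - x₂, 1 - x₂ + x₁) = (x₂ - x₁, 1 - x₁) ∧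
    F1 (x₂ - x₁, 1 - x₁) = (x₁, x₂) :=
  neutral_period3_family_in_region1_general r s x₁ x₂ hs h1 hx1lo hx2lo hx2hi
end
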